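/- arXiv:1701.02618 — 5 statements merged into one kernel-verified Lean document; each statement's English description precedes it below -/
import Mathlib

section
/- Let U = ∑_{ν∈G} u(ν)·ν^{−1} with u(ν) ∈ ℤ_{(p)} satisfy ∑_{ν∈G} u(ν)·α^{ν^{−1}} ≡ 0 (mod p·Z_{K,(p)}), where α ∈ Z_K and p ∤ |G|. Then for every absolutely irreducible character φ of G (field of values C), setting u_φ(ν) := (φ(1)/n)·∑_{τ∈G} φ(τ^{−1})·u(ντ) ∈ Z_{C,(p)}, one has ∑_{ν∈G} u_φ(ν)·α^{ν^{−1}} ≡ 0 (mod p·Z_{KC,(p)}), i.e. the φ-component U_φ := e_φ·U also annihilates α modulo p. -/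
open NumberField

noncomputable section

/-- `x` is a `p`-integer of `K`, i.e. `x` lies in the localization `Z_{K,(p)}` of the
ring of integers of `K` away from `p` (denominators prime to `p`). -/
def IsPInt (K : Type*) [Field K] [NumberField K] (p : ℕ) (x : K) : Prop :=
  ∃ (a : 𝓞 K) (d : ℤ), ¬ (p : ℤ) ∣ d ∧ (d : K) * x = (a : K)

/-- `x ∈ I · Z_{K,(p)}`, for an ideal `I` of the ring of integers of `K`. -/
def MemPIdeal (K : Type*) [Field K] [NumberField K] (p : ℕ) (I : Ideal (𝓞 K)) (x : K) : Prop :=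
  ∃ (a : 𝓞 K) (d : ℤ), ¬ (p : ℤ) ∣ d ∧ a ∈ I ∧ (d : K) * x = (a : K)

/-- `x ∈ K^×` is prime to `p` : it is a unit at every place of `K` above `p`. -/
def PrimeToP (K : Type*) [Field K] [NumberField K] (p : ℕ) (x : K) : Prop :=
  IsPInt K p x ∧ IsPInt K p x⁻¹

/-- the prime `p` is unramified in `K`. -/
def UnramifiedIn (K : Type*) [Field K] [NumberField K] (p : ℕ) : Prop :=
  ∀ P : Ideal (𝓞 K), P.IsPrime → (p : 𝓞 K) ∈ P →
    Ideal.ramificationIdx' (Ideal.span {(p : ℤ)}) P = 1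

/-- `np` is the common residue degree of the primes of `K` above `p`. -/
def ResidueDeg (K : Type*) [Field K] [NumberField K] (p np : ℕ) : Prop :=
  ∀ P : Ideal (𝓞 K), P.IsPrime → (p : 𝓞 K) ∈ P →
    Ideal.inertiaDeg' (Ideal.span {(p : ℤ)}) P = np

/-- a rational number is a `p`-integer, i.e. lies in `ℤ_(p)`. -/
def RatIsPInt (p : ℕ) (q : ℚ) : Prop :=
  ∃ a d : ℤ, ¬ (p : ℤ) ∣ d ∧ (d : ℚ) * q = (a : ℚ)

/-- the generalized Fermat quotient `α_p(x) = (x^{p^{n_p}-1} - 1)/p`. -/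
def alphaP (K : Type*) [Field K] [NumberField K] (p np : ℕ) (x : K) : K :=
  (x ^ (p ^ np - 1) - 1) / p

/-- The matrix representation `ρ` of `G = Gal(K/ℚ)` with coefficients in `M` is absolutely
irreducible (Burnside criterion: its image generates the full matrix algebra). -/
def AbsIrred (K M : Type*) [Field K] [NumberField K] [Field M] [NumberField M]
    (m : ℕ) (ρ : (K ≃ₐ[ℚ] K) →* Matrix (Fin m) (Fin m) M) : Prop :=
  Algebra.adjoin M (Set.range fun g : K ≃ₐ[ℚ] K => ρ g) = ⊤

/-- `D` is the decomposition group of the prime `P` of `M`: the set of automorphisms of `M`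
stabilizing `P`. -/
def IsDecompGroup (M : Type*) [Field M] [NumberField M]
    (P : Ideal (𝓞 M)) (D : Finset (M ≃ₐ[ℚ] M)) : Prop :=
  ∀ s : M ≃ₐ[ℚ] M, s ∈ D ↔
    ∀ a : 𝓞 M, a ∈ P → ∀ b : 𝓞 M, (b : M) = s (a : M) → b ∈ P

/-- Coefficient at `ν` of the `φ`-component `U_φ = e_φ·U` of `U = ∑_ν u(ν)·ν⁻¹` with rational
coefficients: `u_φ(ν) = (φ(1)/n)·∑_{τ∈G} φ(τ⁻¹)·u(ντ)`, where `φ = tr ∘ ρ`. -/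
def eCompQ (K M : Type*) [Field K] [NumberField K] [Field M] [NumberField M]
    (m : ℕ) (ρ : (K ≃ₐ[ℚ] K) →* Matrix (Fin m) (Fin m) M)
    (u : (K ≃ₐ[ℚ] K) → ℚ) (ν : K ≃ₐ[ℚ] K) : M :=
  ((m : M) / (Fintype.card (K ≃ₐ[ℚ] K) : M)) *
    ∑ τ : K ≃ₐ[ℚ] K, Matrix.trace (ρ τ⁻¹) * (u (ν * τ) : M)

/-- Coefficient at `ν` of the `φ`-component `W_φ = e_φ·W` of `W = ∑_ν w(ν)·ν⁻¹` with
coefficients in `M`. -/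
def eCompM (K M : Type*) [Field K] [NumberField K] [Field M] [NumberField M]
    (m : ℕ) (ρ : (K ≃ₐ[ℚ] K) →* Matrix (Fin m) (Fin m) M)
    (w : (K ≃ₐ[ℚ] K) → M) (ν : K ≃ₐ[ℚ] K) : M :=
  ((m : M) / (Fintype.card (K ≃ₐ[ℚ] K) : M)) *
    ∑ τ : K ≃ₐ[ℚ] K, Matrix.trace (ρ τ⁻¹) * w (ν * τ)

/-- The local `θ`-regulator `Δ_p^θ(α) = ∏_{φ'∣θ} P^{φ'}(…, α^ν, …)`, where the absolutely
irreducible constituents `φ' = φ^s` of `θ` are indexed by the decomposition group `D` and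
`P^{φ^s}(…, α^ν, …) = det(∑_ν α^ν · ρ^s(ν⁻¹))`. -/
def DeltaTheta (K M : Type*) [Field K] [NumberField K] [Field M] [NumberField M]
    [Algebra K M] (m : ℕ) (ρ : (K ≃ₐ[ℚ] K) →* Matrix (Fin m) (Fin m) M)
    (D : Finset (M ≃ₐ[ℚ] M)) (α : K) : M :=
  ∏ s ∈ D, Matrix.det (∑ ν : K ≃ₐ[ℚ] K, algebraMap K M (ν α) • (ρ ν⁻¹).map s)

/-!
Writing `S = ∑_μ u(μ)·α^{μ⁻¹}`, the substitution `μ = ντ` turns the `φ`-component into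
`∑_ν u_φ(ν)·α^{ν⁻¹} = (φ(1)/n)·∑_τ φ(τ⁻¹)·τ(S)`. Here `φ(1)/n` is a `p`-integer because
`p ∤ n`, the character values are sums of roots of unity, hence algebraic integers, and every
conjugate `τ(S)` lies in `p·Z_{K,(p)}` together with `S`.
-/

namespace Matrix

variable {F : Type*} [Field F] {n : Type*} [Fintype n] [DecidableEq n]

theorem pow_eq_one_of_mem_spectrum {A : Matrix n n F} {k : ℕ} (hA : A ^ k = 1) {r : F}
    (hr : r ∈ spectrum F A) : r ^ k = 1 := by
  have : Nontrivial (Matrix n n F) := by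
    by_contra h
    rw [not_nontrivial_iff_subsingleton] at h
    exact spectrum.notMem_iff.mpr (isUnit_of_subsingleton _) hr
  simpa [hA, spectrum.one_eq] using spectrum.pow_mem_pow A k hr

theorem isIntegral_trace_of_pow_eq_one {A : Matrix n n F} {k : ℕ} (hk : k ≠ 0)
    (hA : A ^ k = 1) : IsIntegral ℤ A.trace := by
  let σ := algebraMap F (AlgebraicClosure F)
  have hσA : A.map σ ^ k = 1 := by rw [← RingHom.mapMatrix_apply, ← map_pow, hA, map_one]
  rw [← isIntegral_algebraMap_iff σ.injective, AddMonoidHom.map_trace σ A,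
    trace_eq_sum_roots_charpoly]
  refine IsIntegral.multiset_sum fun r hr => IsIntegral.of_pow (Nat.pos_of_ne_zero hk) ?_
  rw [pow_eq_one_of_mem_spectrum hσA
    (mem_spectrum_of_isRoot_charpoly (Polynomial.isRoot_of_mem_roots hr))]
  exact isIntegral_one

end Matrix

section PIntegers

def pIntegers (L : Type*) [Field L] [NumberField L] {p : ℕ} (hp : p.Prime) : Subring L where
  carrier := {x | IsPInt L p x}
  zero_mem' := ⟨0, 1, by exact_mod_cast hp.not_dvd_one, by simp⟩
  one_mem' := ⟨1, 1, by exact_mod_cast hp.not_dvd_one, by simp⟩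
  add_mem' := by
    rintro x y ⟨a, d, hd, hx⟩ ⟨b, e, he, hy⟩
    refine ⟨e * a + d * b, d * e, (Nat.prime_iff_prime_int.mp hp).not_dvd_mul hd he, ?_⟩
    simp only [map_add, map_mul, map_intCast, Int.cast_mul]
    linear_combination (e : L) * hx + (d : L) * hy
  mul_mem' := by
    rintro x y ⟨a, d, hd, hx⟩ ⟨b, e, he, hy⟩
    refine ⟨a * b, d * e, (Nat.prime_iff_prime_int.mp hp).not_dvd_mul hd he, ?_⟩
    simp only [map_mul, Int.cast_mul]
    linear_combination (e * y) * hx + (a : L) * hy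
  neg_mem' := by
    rintro x ⟨a, d, hd, hx⟩
    exact ⟨-a, d, hd, by push_cast; linear_combination -hx⟩

variable {K L : Type*} [Field K] [NumberField K] [Field L] [NumberField L] {p : ℕ}

theorem mem_pIntegers (hp : p.Prime) {x : L} : x ∈ pIntegers L hp ↔ IsPInt L p x := Iff.rfl

theorem isPInt_of_isIntegral (hp : p.Prime) {x : L} (hx : IsIntegral ℤ x) : IsPInt L p x :=
  ⟨⟨x, hx⟩, 1, by exact_mod_cast hp.not_dvd_one, by rw [Int.cast_one, one_mul]; rfl⟩

theorem isPInt_natCast_div {a b : ℕ} (hb : ¬ p ∣ b) : IsPInt L p (a / b) := by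
  have hb₀ : (b : L) ≠ 0 := Nat.cast_ne_zero.mpr (by rintro rfl; exact hb (dvd_zero p))
  exact ⟨a, b, by exact_mod_cast hb, by push_cast; field_simp⟩

theorem IsPInt.map {x : K} (hx : IsPInt K p x) (f : K →+* L) : IsPInt L p (f x) := by
  obtain ⟨a, d, hd, h⟩ := hx
  refine ⟨⟨f a, a.isIntegral_coe.map f.toIntAlgHom⟩, d, hd, ?_⟩
  rw [← map_intCast f, ← map_mul, h]
  rfl

end PIntegers

theorem sum_eCompQ_mul_apply_inv {K M : Type*} [Field K] [NumberField K] [Field M]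
    [NumberField M] (f : K →+* M) (m : ℕ) (ρ : (K ≃ₐ[ℚ] K) →* Matrix (Fin m) (Fin m) M)
    (u : (K ≃ₐ[ℚ] K) → ℚ) (α : K) :
    ∑ ν : K ≃ₐ[ℚ] K, eCompQ K M m ρ u ν * f (ν⁻¹ α) =
      (m / Fintype.card (K ≃ₐ[ℚ] K) : M) *
        ∑ τ : K ≃ₐ[ℚ] K, (ρ τ⁻¹).trace * f (τ (∑ μ : K ≃ₐ[ℚ] K, (u μ : K) * μ⁻¹ α)) := by
  have hreindex (ν τ : K ≃ₐ[ℚ] K) : τ ((ν * τ)⁻¹ α) = ν⁻¹ α := by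
    rw [← AlgEquiv.mul_apply, mul_inv_rev, mul_inv_cancel_left]
  simp only [eCompQ, mul_assoc, Finset.sum_mul, ← Finset.mul_sum, map_sum, map_mul, map_ratCast]
  rw [Finset.sum_comm]
  refine congrArg _ (Finset.sum_congr rfl fun τ _ => ?_)
  rw [Finset.mul_sum]
  exact Fintype.sum_equiv (Equiv.mulRight τ) _ _ fun ν => by rw [Equiv.coe_mulRight, hreindex]

theorem statement7_general (K M : Type*) [Field K] [NumberField K]
    [Field M] [NumberField M] [Algebra K M]
    (m : ℕ) (ρ : (K ≃ₐ[ℚ] K) →* Matrix (Fin m) (Fin m) M)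
    (p : ℕ) (hp : p.Prime) (hpn : ¬ p ∣ Fintype.card (K ≃ₐ[ℚ] K))
    (α : 𝓞 K) (u : (K ≃ₐ[ℚ] K) → ℚ)
    (hrel : IsPInt K p ((∑ ν : K ≃ₐ[ℚ] K, (u ν : K) * ν⁻¹ (α : K)) / p)) :
    IsPInt M p
      ((∑ ν : K ≃ₐ[ℚ] K, eCompQ K M m ρ u ν * algebraMap K M (ν⁻¹ (α : K))) / p) := by
  rw [sum_eCompQ_mul_apply_inv, mul_div_assoc, Finset.sum_div, ← mem_pIntegers hp]
  refine mul_mem (isPInt_natCast_div hpn) (sum_mem fun τ _ => ?_)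
  rw [mul_div_assoc]
  refine mul_mem (isPInt_of_isIntegral hp ?_) ?_
  · exact (ρ τ⁻¹).isIntegral_trace_of_pow_eq_one Fintype.card_ne_zero
      (by rw [← map_pow, pow_card_eq_one, map_one])
  · rw [mem_pIntegers]
    simpa using hrel.map ((algebraMap K M).comp τ.toRingHom)

/-- Lemma 3.4. If `U = ∑_ν u(ν)·ν⁻¹` with `u(ν) ∈ ℤ_(p)` satisfies
`∑_ν u(ν)·α^{ν⁻¹} ≡ 0 (mod p·Z_{K,(p)})`, `α ∈ Z_K`, `p ∤ |G|`, then for every absolutely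
irreducible character `φ` of `G` (realized over `M ⊇ K, C`), the `φ`-component
`U_φ = e_φ·U`, with coefficients `u_φ(ν) = (φ(1)/n)·∑_τ φ(τ⁻¹)·u(ντ)`, also annihilates `α`
modulo `p` : `∑_ν u_φ(ν)·α^{ν⁻¹} ≡ 0 (mod p·Z_{KC,(p)})`. -/
theorem statement7 (K M : Type*) [Field K] [NumberField K] [IsGalois ℚ K]
    [Field M] [NumberField M] [Algebra K M]
    (m : ℕ) (ρ : (K ≃ₐ[ℚ] K) →* Matrix (Fin m) (Fin m) M)
    (hirr : AbsIrred K M m ρ)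
    (p : ℕ) (hp : p.Prime) (hpn : ¬ p ∣ Fintype.card (K ≃ₐ[ℚ] K))
    (hurK : UnramifiedIn K p) (hurM : UnramifiedIn M p)
    (α : 𝓞 K) (u : (K ≃ₐ[ℚ] K) → ℚ) (hu : ∀ ν, RatIsPInt p (u ν))
    (hrel : IsPInt K p ((∑ ν : K ≃ₐ[ℚ] K, (u ν : K) * ν⁻¹ (α : K)) / p)) :
    IsPInt M p
      ((∑ ν : K ≃ₐ[ℚ] K, eCompQ K M m ρ u ν * algebraMap K M (ν⁻¹ (α : K))) / p) :=
  statement7_general K M m ρ p hp hpn α u hrel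
end
end

section
/- Assume K ≠ ℚ and let η ∈ Z_K generate a multiplicative ℤ[G]-module of ℤ-rank n = [K:ℚ]. Then there is a bound p_0 such that for every prime p > p_0, unramified in K and prime to η, whose residue degree n_p in K/ℚ is greater than 1, the order d of the image of η in the quotient group (Z_K/pZ_K)^× / (image of μ_K) does not divide p − 1, where μ_K is the group of roots of unity of K. -/
/-!
Let `σ` be an arithmetic Frobenius at a prime `𝔓 ∣ p`, so that `σ x ≡ x ^ p (mod 𝔓)`. If
`η ^ (p - 1) ≡ ζ (mod p)` for a root of unity `ζ`, then `σ η ≡ ζ η (mod 𝔓)`. For `σ ≠ 1` the rank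
hypothesis makes `σ η - ζ η` nonzero, so `p ≤ N𝔓 ≤ |N(σ η - ζ η)|`, and the right-hand side is
bounded independently of `p` because there are finitely many `σ` and `ζ`. For `σ = 1` every
residue class mod `𝔓` is a root of `X ^ p - X`, so `p ^ n_p = N𝔓 ≤ p`, contradicting `n_p > 1`.
-/

open NumberField

noncomputable section

/-- the multiplicative `ℤ[G]`-module generated by `η` is of `ℤ`-rank `n = [K:ℚ]`:
the conjugates of `η` are multiplicatively independent modulo torsion. -/
def GenRankN (K : Type*) [Field K] [NumberField K] (η : K) : Prop :=
  ∀ u : (K ≃ₐ[ℚ] K) → ℤ,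
    (∃ k : ℕ, 0 < k ∧ (∏ ν : K ≃ₐ[ℚ] K, (ν η) ^ (u ν)) ^ k = 1) → ∀ ν, u ν = 0

open Polynomial

theorem Nat.card_le_of_forall_pow_eq_self {F : Type*} [Field F] {n : ℕ} (hn : 1 < n)
    (h : ∀ y : F, y ^ n = y) : Nat.card F ≤ n := by
  classical
  have hq : (X ^ n - X : F[X]) ≠ 0 := FiniteField.X_pow_card_sub_X_ne_zero F hn
  have : Finite F := Set.finite_univ_iff.1 <|
    (finite_setOfPred_isRoot hq).subset fun y _ => by simp [h y]
  have : Fintype F := Fintype.ofFinite F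
  rw [Nat.card_eq_fintype_card, ← FiniteField.X_pow_card_sub_X_natDegree_eq F hn]
  exact card_le_degree_of_subset_roots fun y _ => by simp [mem_roots hq, h y]

theorem Ideal.absNorm_le_of_forall_pow_sub_self_mem {S : Type*} [CommRing S] [IsDedekindDomain S]
    [Module.Free ℤ S] {P : Ideal S} [P.IsMaximal] {n : ℕ} (hn : 1 < n)
    (h : ∀ x : S, x ^ n - x ∈ P) : Ideal.absNorm P ≤ n := by
  let := Ideal.Quotient.field P
  rw [Ideal.absNorm_apply, Submodule.cardQuot_apply]
  refine Nat.card_le_of_forall_pow_eq_self hn fun y => ?_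
  obtain ⟨x, rfl⟩ := Ideal.Quotient.mk_surjective y
  rw [← map_pow, Ideal.Quotient.eq]
  exact h x

theorem Ideal.absNorm_le_natAbs_norm_of_mem {S : Type*} [CommRing S] [IsDedekindDomain S]
    [Module.Free ℤ S] [Module.Finite ℤ S] {P : Ideal S} {t : S} (ht : t ∈ P) (ht0 : t ≠ 0) :
    Ideal.absNorm P ≤ (Algebra.norm ℤ t).natAbs := by
  rw [← Ideal.absNorm_span_singleton]
  exact Nat.le_of_dvd (Nat.pos_of_ne_zero (by simpa [Ideal.absNorm_eq_zero_iff] using ht0))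
    (Ideal.absNorm_dvd_absNorm_of_le ((Ideal.span_singleton_le_iff_mem P).2 ht))

theorem Ideal.liesOver_span_natCast {S : Type*} [CommRing S] {P : Ideal S} [P.IsPrime] {p : ℕ}
    (hp : p.Prime) (hpP : (p : S) ∈ P) : P.LiesOver (Ideal.span {(p : ℤ)}) :=
  (Ideal.liesOver_span_iff Ideal.IsPrime.ne_top' (Nat.prime_iff_prime_int.mp hp)).2
    (by simpa using hpP)

namespace NumberField

variable {K : Type*} [Field K] [NumberField K]

theorem exists_isMaximal_natCast_mem {p : ℕ} (hp : p.Prime) :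
    ∃ P : Ideal (𝓞 K), P.IsMaximal ∧ (p : 𝓞 K) ∈ P := by
  have : Fact p.Prime := ⟨hp⟩
  obtain ⟨P, hPmax, _⟩ :=
    Ideal.exists_maximal_ideal_liesOver_of_isIntegral (S := 𝓞 K) (Ideal.span {(p : ℤ)})
  exact ⟨P, hPmax, by
    simpa using (Ideal.mem_of_liesOver P (Ideal.span {(p : ℤ)}) p).1
      (Ideal.mem_span_singleton_self _)⟩

theorem ResidueDeg.absNorm_eq {p np : ℕ} (hres : ResidueDeg K p np) (hp : p.Prime)
    {P : Ideal (𝓞 K)} [hP : P.IsPrime] (hpP : (p : 𝓞 K) ∈ P) : Ideal.absNorm P = p ^ np := by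
  have := Ideal.liesOver_span_natCast hp hpP
  rw [Ideal.absNorm_eq_pow_inertiaDeg' P hp, hres P hP hpP]

theorem ne_one_of_forall_smul_sub_pow_mem {P : Ideal (𝓞 K)} [P.IsMaximal] {p np : ℕ}
    (hp : 1 < p) (hnorm : Ideal.absNorm P = p ^ np) (hnp : 1 < np) {σ : K ≃ₐ[ℚ] K}
    (hσ : ∀ x : 𝓞 K, σ • x - x ^ p ∈ P) : σ ≠ 1 := by
  rintro rfl
  have hle := Ideal.absNorm_le_of_forall_pow_sub_self_mem hp fun x => by
    simpa using P.neg_mem (hσ x)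
  rw [hnorm] at hle
  exact (Nat.pow_lt_pow_right hp hnp).not_ge (by simpa using hle)

theorem RingOfIntegers.finite_setOf_isOfFinOrder : {ζ : 𝓞 K | IsOfFinOrder ζ}.Finite :=
  (Set.finite_range fun u : Units.torsion K => ((u : (𝓞 K)ˣ) : 𝓞 K)).subset fun _ hζ =>
    ⟨⟨hζ.unit, (CommGroup.mem_torsion _).2 (Units.isOfFinOrder_val.1 hζ)⟩, rfl⟩

theorem GenRankN.apply_ne_mul {η : K} (hrank : GenRankN K η) (hη : η ≠ 0)
    {σ : K ≃ₐ[ℚ] K} (hσ : σ ≠ 1) {z : K} (hz : IsOfFinOrder z) : σ η ≠ z * η := by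
  classical
  intro heq
  obtain ⟨k, hk, hzk⟩ := isOfFinOrder_iff_pow_eq_one.1 hz
  have hprod : ∏ ν : K ≃ₐ[ℚ] K, ν η ^ (Pi.single σ 1 - Pi.single 1 1 : _ → ℤ) ν = z := by
    simp [zpow_sub₀, Finset.prod_div_distrib, Pi.single_apply, heq, hη]
  have h := hrank _ ⟨k, hk, by rw [hprod, hzk]⟩ σ
  rw [Pi.sub_apply, Pi.single_eq_same, Pi.single_eq_of_ne hσ] at h
  exact one_ne_zero (sub_zero (1 : ℤ) ▸ h)

theorem exists_natAbs_norm_smul_sub_mul_le (η : 𝓞 K) :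
    ∃ C : ℕ, ∀ (σ : K ≃ₐ[ℚ] K) (ζ : 𝓞 K), IsOfFinOrder ζ →
      (Algebra.norm ℤ (σ • η - ζ * η)).natAbs ≤ C := by
  have := (RingOfIntegers.finite_setOf_isOfFinOrder (K := K)).to_subtype
  obtain ⟨C, hC⟩ := Finite.exists_le fun q : (K ≃ₐ[ℚ] K) × {ζ : 𝓞 K | IsOfFinOrder ζ} =>
    (Algebra.norm ℤ (q.1 • η - q.2 * η)).natAbs
  exact ⟨C, fun σ ζ hζ => hC (σ, ⟨ζ, hζ⟩)⟩

variable [IsGalois ℚ K]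

theorem exists_forall_smul_sub_pow_mem {p : ℕ} (hp : p.Prime) (P : Ideal (𝓞 K)) [P.IsMaximal]
    (hpP : (p : 𝓞 K) ∈ P) : ∃ σ : K ≃ₐ[ℚ] K, ∀ x : 𝓞 K, σ • x - x ^ p ∈ P := by
  have := Ideal.liesOver_span_natCast hp hpP
  obtain ⟨σ, hσ⟩ := IsArithFrobAt.exists_of_isInvariant ℤ (K ≃ₐ[ℚ] K) P
  refine ⟨σ, fun x => ?_⟩
  have hσx := hσ x
  rwa [← Ideal.over_def P (Ideal.span {(p : ℤ)}), Int.card_ideal_quot] at hσx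

end NumberField

theorem statement14_general (K : Type*) [Field K] [NumberField K] [IsGalois ℚ K]
    (η : 𝓞 K) (hrank : GenRankN K (η : K)) :
    ∃ p0 : ℕ, ∀ p : ℕ, p0 < p → p.Prime → UnramifiedIn K p → PrimeToP K p (η : K) →
      ∀ np : ℕ, ResidueDeg K p np → 1 < np →
      ¬ ∃ ζ : 𝓞 K, (∃ k : ℕ, 0 < k ∧ ζ ^ k = 1) ∧
        η ^ (p - 1) - ζ ∈ Ideal.span {(p : 𝓞 K)} := by
  obtain ⟨C, hC⟩ := exists_natAbs_norm_smul_sub_mul_le η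
  refine ⟨C, fun p hpC hp _ _ np hres hnp ⟨ζ, hζ, hmem⟩ => ?_⟩
  replace hζ : IsOfFinOrder ζ := isOfFinOrder_iff_pow_eq_one.2 hζ
  obtain ⟨P, hPmax, hpP⟩ := exists_isMaximal_natCast_mem (K := K) hp
  have hcong : η ^ (p - 1) - ζ ∈ P := (Ideal.span_singleton_le_iff_mem P).2 hpP hmem
  have hη : η ≠ 0 := by
    rintro rfl
    refine hPmax.ne_top (Ideal.eq_top_of_isUnit_mem P ?_ hζ.isUnit)
    simpa [zero_pow (Nat.sub_ne_zero_of_lt hp.one_lt)] using P.neg_mem hcong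
  obtain ⟨σ, hσ⟩ := exists_forall_smul_sub_pow_mem hp P hpP
  have hση : σ • η - ζ * η ∈ P := by
    have h : (η ^ (p - 1) - ζ) * η = η ^ p - ζ * η := by
      rw [sub_mul, ← pow_succ, Nat.sub_add_cancel hp.one_le]
    rw [← sub_add_sub_cancel _ (η ^ p), ← h]
    exact P.add_mem (hσ η) (P.mul_mem_right η hcong)
  have hnorm := hres.absNorm_eq hp hpP
  have hσ1 := ne_one_of_forall_smul_sub_pow_mem hp.one_lt hnorm hnp hσ
  have hne : σ • η - ζ * η ≠ 0 := by
    rw [sub_ne_zero, ← RingOfIntegers.coe_injective.ne_iff]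
    exact hrank.apply_ne_mul (by simpa using hη) hσ1
      ((algebraMap (𝓞 K) K : 𝓞 K →* K).isOfFinOrder hζ)
  have := calc p ≤ p ^ np := Nat.le_self_pow (by omega) p
    _ = Ideal.absNorm P := hnorm.symm
    _ ≤ (Algebra.norm ℤ (σ • η - ζ * η)).natAbs := Ideal.absNorm_le_natAbs_norm_of_mem hση hne
    _ ≤ C := hC σ ζ hζ
  omega

/-- Lemma 6.3 (ii). Assume `K ≠ ℚ` and let `η ∈ Z_K` generate a
multiplicative `ℤ[G]`-module of `ℤ`-rank `n = [K:ℚ]`. Then there is a bound `p₀` such that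
for every prime `p > p₀`, unramified in `K`, prime to `η`, with residue degree `n_p > 1`,
the order `d` of the image of `η` in `(Z_K/pZ_K)^× / (image of μ_K)` does not divide `p−1`;
equivalently, `η^{p−1}` is not congruent modulo `p` to a root of unity of `K`. -/
theorem statement14 (K : Type*) [Field K] [NumberField K] [IsGalois ℚ K]
    (hK : 1 < Module.finrank ℚ K)
    (η : 𝓞 K) (hrank : GenRankN K (η : K)) :
    ∃ p0 : ℕ, ∀ p : ℕ, p0 < p → p.Prime → UnramifiedIn K p → PrimeToP K p (η : K) →
      ∀ np : ℕ, ResidueDeg K p np → 1 < np →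
      ¬ ∃ ζ : 𝓞 K, (∃ k : ℕ, 0 < k ∧ ζ ^ k = 1) ∧
        η ^ (p - 1) - ζ ∈ Ideal.span {(p : 𝓞 K)} :=
  statement14_general K η hrank
end
end

section
/- Let η ∈ Z_K be prime to p and not a root of unity, and let c_0(η) := max_{σ∈G} |η^σ| (maximum of the complex absolute values of the conjugates of η), so c_0(η) > 1. Let D be the multiplicative order of the image of η in (Z_K/pZ_K)^× and d its order in (Z_K/pZ_K)^× modulo the image of μ_K. Then D ≥ d ≥ log(p−1)/log(c_0(η)). -/
open NumberField

noncomputable section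

/-- `c₀(η) = max_{σ∈G} |η^σ|` : the maximum of the complex absolute values of the conjugates
of `η`, under a fixed embedding `ι : K → ℂ`. -/
def houseC (K : Type*) [Field K] [NumberField K] (ι : K →+* ℂ) (x : K) : ℝ :=
  ⨆ σ : K ≃ₐ[ℚ] K, ‖ι (σ x)‖

/-- the order `D` of the image of `η` in `(Z_K/pZ_K)^×`. -/
def ordModP (K : Type*) [Field K] [NumberField K] (p : ℕ) (η : 𝓞 K) : ℕ :=
  orderOf (Ideal.Quotient.mk (Ideal.span {(p : 𝓞 K)}) η)

/-- the order `d` of the image of `η` in `(Z_K/pZ_K)^×` modulo the image of the group `μ_K`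
of roots of unity of `K`: the least `k ≥ 1` with `η^k` congruent to a root of unity mod `p`. -/
def ordModPModMu (K : Type*) [Field K] [NumberField K] (p : ℕ) (η : 𝓞 K) : ℕ :=
  sInf {k : ℕ | 0 < k ∧ ∃ ζ : 𝓞 K, (∃ j : ℕ, 0 < j ∧ ζ ^ j = 1) ∧
    η ^ k - ζ ∈ Ideal.span {(p : 𝓞 K)}}

/-!
Since `η` is not a root of unity, Kronecker's theorem gives a conjugate of absolute value `> 1`,
so `c₀(η) > 1`. The order `D` is finite because `η` is a unit modulo `p`, and `d ≤ D` since
`η ^ D ≡ 1`. If `η ^ d ≡ ζ (mod p)` with `ζ ∈ μ_K`, then `α = η ^ d - ζ` is a nonzero multiple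
of `p`, so `p ^ n ≤ |N(α)| = ∏_σ |α^σ| ≤ (c₀(η) ^ d + 1) ^ n`, i.e. `p - 1 ≤ c₀(η) ^ d`.
-/

theorem isUnit_mk_span_singleton_of_isCoprime {R : Type*} [CommRing R] {a b : R}
    (h : IsCoprime a b) : IsUnit (Ideal.Quotient.mk (Ideal.span {a}) b) := by
  obtain ⟨u, v, huv⟩ := h
  refine IsUnit.of_mul_eq_one (Ideal.Quotient.mk _ v) ?_
  rw [← map_mul, ← map_one (Ideal.Quotient.mk _), Ideal.Quotient.eq, Ideal.mem_span_singleton']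
  exact ⟨-u, by linear_combination -huv⟩

section RingOfIntegers

variable {K : Type*} [Field K] [NumberField K]

theorem finite_quotient_span_natCast {m : ℕ} (hm : m ≠ 0) :
    Finite (𝓞 K ⧸ Ideal.span {(m : 𝓞 K)}) :=
  Ideal.finiteQuotientOfFreeOfNeBot _ <| by
    rw [Ne, Ideal.span_singleton_eq_bot]
    exact_mod_cast hm

theorem isUnit_mk_of_isPInt_inv {p : ℕ} (hp : p.Prime) {η : 𝓞 K} (hη0 : η ≠ 0)
    (h : IsPInt K p (η : K)⁻¹) : IsUnit (Ideal.Quotient.mk (Ideal.span {(p : 𝓞 K)}) η) := by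
  obtain ⟨a, e, hpe, hea⟩ := h
  have he : (e : 𝓞 K) = a * η := by
    have : (e : K) = a * η := by
      rw [← hea, mul_assoc, inv_mul_cancel₀ (RingOfIntegers.coe_ne_zero_iff.2 hη0), mul_one]
    exact RingOfIntegers.coe_injective (by simpa using this)
  have hcop : IsCoprime (p : 𝓞 K) (e : 𝓞 K) := by
    exact_mod_cast ((Nat.prime_iff_prime_int.1 hp).coprime_iff_not_dvd.2 hpe).intCast
  have hunit := isUnit_mk_span_singleton_of_isCoprime hcop
  rw [he, map_mul] at hunit
  exact isUnit_of_mul_isUnit_right hunit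

theorem ordModP_pos {p : ℕ} (hp : p ≠ 0) {η : 𝓞 K}
    (h : IsUnit (Ideal.Quotient.mk (Ideal.span {(p : 𝓞 K)}) η)) : 0 < ordModP K p η :=
  have := finite_quotient_span_natCast (K := K) hp
  (isOfFinOrder_iff_isUnit.2 h).orderOf_pos

theorem ordModP_mem {p : ℕ} {η : 𝓞 K} (h : 0 < ordModP K p η) :
    ordModP K p η ∈ {k : ℕ | 0 < k ∧ ∃ ζ : 𝓞 K, (∃ j : ℕ, 0 < j ∧ ζ ^ j = 1) ∧
      η ^ k - ζ ∈ Ideal.span {(p : 𝓞 K)}} := by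
  refine ⟨h, 1, ⟨1, one_pos, one_pow 1⟩, Ideal.Quotient.eq.1 ?_⟩
  rw [map_pow, map_one]
  exact pow_orderOf_eq_one _

theorem ordModPModMu_le_ordModP {p : ℕ} {η : 𝓞 K} (h : 0 < ordModP K p η) :
    ordModPModMu K p η ≤ ordModP K p η :=
  Nat.sInf_le (ordModP_mem h)

theorem ordModPModMu_spec {p : ℕ} {η : 𝓞 K} (h : 0 < ordModP K p η) :
    0 < ordModPModMu K p η ∧ ∃ ζ : 𝓞 K, (∃ j : ℕ, 0 < j ∧ ζ ^ j = 1) ∧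
      η ^ ordModPModMu K p η - ζ ∈ Ideal.span {(p : 𝓞 K)} :=
  Nat.sInf_mem ⟨_, ordModP_mem h⟩

theorem norm_conj_le_houseC (ι : K →+* ℂ) (x : K) (σ : K ≃ₐ[ℚ] K) :
    ‖ι (σ x)‖ ≤ houseC K ι x := by
  unfold houseC
  exact le_ciSup (f := fun τ : K ≃ₐ[ℚ] K => ‖ι (τ x)‖) (Set.finite_range _).bddAbove σ

end RingOfIntegers

section Galois

variable {K : Type*} [Field K] [NumberField K] [IsGalois ℚ K]

theorem exists_algEquiv_comp_eq (ι φ : K →+* ℂ) : ∃ σ : K ≃ₐ[ℚ] K, ∀ x, φ x = ι (σ x) := by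
  let _ : Algebra K ℂ := ι.toAlgebra
  have : IsScalarTower ℚ K ℂ := IsScalarTower.of_algebraMap_eq' (Subsingleton.elim _ _)
  exact ⟨φ.toRatAlgHom.restrictNormal' K,
    fun x => (AlgHom.restrictNormal_commutes φ.toRatAlgHom K x).symm⟩

theorem prod_norm_conj_eq_abs_norm (ι : K →+* ℂ) (x : 𝓞 K) :
    ∏ σ : K ≃ₐ[ℚ] K, ‖ι (σ x)‖ = |(Algebra.norm ℤ x : ℝ)| := by
  have hN : ι (algebraMap ℚ K (Algebra.norm ℚ (x : K))) = ∏ σ : K ≃ₐ[ℚ] K, ι (σ x) := by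
    rw [Algebra.norm_eq_prod_automorphisms, map_prod]
  rw [← norm_prod, ← hN, eq_ratCast (algebraMap ℚ K), map_ratCast, ← Algebra.coe_norm_int]
  push_cast
  exact Complex.norm_intCast _

theorem pow_finrank_le_prod_norm_conj (ι : K →+* ℂ) {m : ℕ} {x : 𝓞 K} (hx0 : x ≠ 0)
    (hx : x ∈ Ideal.span {(m : 𝓞 K)}) :
    (m : ℝ) ^ Module.finrank ℚ K ≤ ∏ σ : K ≃ₐ[ℚ] K, ‖ι (σ x)‖ := by
  obtain ⟨β, rfl⟩ := Ideal.mem_span_singleton'.1 hx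
  have hβ : (1 : ℝ) ≤ |(Algebra.norm ℤ β : ℝ)| := by
    exact_mod_cast Int.one_le_abs (Algebra.norm_ne_zero_iff.2 (left_ne_zero_of_mul hx0))
  rw [prod_norm_conj_eq_abs_norm, map_mul, ← map_natCast (algebraMap ℤ (𝓞 K)),
    Algebra.norm_algebraMap, RingOfIntegers.rank]
  push_cast
  rw [abs_mul, abs_pow, Nat.abs_cast]
  exact le_mul_of_one_le_left (by positivity) hβ

theorem one_lt_houseC (ι : K →+* ℂ) {η : 𝓞 K} (hη0 : η ≠ 0)
    (hη : ¬ ∃ k : ℕ, 0 < k ∧ η ^ k = 1) : 1 < houseC K ι η := by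
  classical
  by_contra! hle
  have hσ : ∀ σ : K ≃ₐ[ℚ] K, ‖ι (σ η)‖ ≤ 1 := fun σ => (norm_conj_le_houseC ι _ σ).trans hle
  have hprod : 1 ≤ ∏ σ : K ≃ₐ[ℚ] K, ‖ι (σ η)‖ := by
    simpa using pow_finrank_le_prod_norm_conj ι (m := 1) hη0 (by simp)
  have heq : ∀ σ : K ≃ₐ[ℚ] K, ‖ι (σ η)‖ = 1 := by
    intro σ
    refine le_antisymm (hσ σ) (hprod.trans ?_)
    rw [← Finset.prod_erase_mul _ _ (Finset.mem_univ σ)]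
    exact mul_le_of_le_one_left (norm_nonneg _)
      (Finset.prod_le_one (fun τ _ => norm_nonneg _) (fun τ _ => hσ τ))
  obtain ⟨k, hk, hηk⟩ := Embeddings.pow_eq_one_of_norm_eq_one K ℂ
    (RingOfIntegers.isIntegral_coe η) fun φ => by
      obtain ⟨σ, hφ⟩ := exists_algEquiv_comp_eq ι φ
      rw [hφ]
      exact heq σ
  exact hη ⟨k, hk, RingOfIntegers.coe_injective (by simpa using hηk)⟩

theorem natCast_le_houseC_pow_add_one (ι : K →+* ℂ) {m k j : ℕ} (hj : 0 < j) {η ζ : 𝓞 K}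
    (hζ : ζ ^ j = 1) (hne : η ^ k ≠ ζ) (hmem : η ^ k - ζ ∈ Ideal.span {(m : 𝓞 K)}) :
    (m : ℝ) ≤ houseC K ι η ^ k + 1 := by
  have hconj : ∀ σ : K ≃ₐ[ℚ] K, ‖ι (σ ↑(η ^ k - ζ))‖ ≤ houseC K ι η ^ k + 1 := by
    intro σ
    have hζK : (ζ : K) ^ j = 1 := by exact_mod_cast congrArg ((↑) : 𝓞 K → K) hζ
    have hζσ : ‖ι (σ ζ)‖ = 1 := Complex.norm_eq_one_of_pow_eq_one
      (by rw [← map_pow, ← map_pow, hζK, map_one, map_one]) hj.ne'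
    calc ‖ι (σ ↑(η ^ k - ζ))‖ = ‖ι (σ η) ^ k - ι (σ ζ)‖ := by simp
      _ ≤ ‖ι (σ η)‖ ^ k + ‖ι (σ ζ)‖ := by rw [← norm_pow]; exact norm_sub_le _ _
      _ ≤ houseC K ι η ^ k + 1 := by
        rw [hζσ]
        gcongr
        exact norm_conj_le_houseC ι _ σ
  have hpow : (m : ℝ) ^ Module.finrank ℚ K ≤ (houseC K ι η ^ k + 1) ^ Module.finrank ℚ K :=
    calc (m : ℝ) ^ Module.finrank ℚ K ≤ ∏ σ : K ≃ₐ[ℚ] K, ‖ι (σ ↑(η ^ k - ζ))‖ :=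
          pow_finrank_le_prod_norm_conj ι (sub_ne_zero.2 hne) hmem
      _ ≤ ∏ _σ : K ≃ₐ[ℚ] K, (houseC K ι η ^ k + 1) :=
          Finset.prod_le_prod (fun σ _ => norm_nonneg _) (fun σ _ => hconj σ)
      _ = (houseC K ι η ^ k + 1) ^ Module.finrank ℚ K := by
          rw [Finset.prod_const, Finset.card_univ, Fintype.card_eq_nat_card,
            IsGalois.card_aut_eq_finrank]
  have hc : 0 ≤ houseC K ι η ^ k + 1 :=
    (norm_nonneg _).trans (hconj 1)
  exact (pow_le_pow_iff_left₀ (Nat.cast_nonneg m) hc Module.finrank_pos.ne').1 hpow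

end Galois

/-- Lemma 6.3 (iii). Let `η ∈ Z_K` be prime to `p` and not a root of
unity, `c₀(η) := max_{σ∈G} |η^σ| (> 1)`, `D` the multiplicative order of `η` mod `p` and `d`
its order mod `p` modulo roots of unity. Then `D ≥ d ≥ log(p−1)/log(c₀(η))`. -/
theorem statement15 (K : Type*) [Field K] [NumberField K] [IsGalois ℚ K]
    (ι : K →+* ℂ) (p : ℕ) (hp : p.Prime)
    (η : 𝓞 K) (hη0 : η ≠ 0) (hpr : PrimeToP K p (η : K))
    (hnr : ¬ ∃ k : ℕ, 0 < k ∧ η ^ k = 1) :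
    1 < houseC K ι (η : K) ∧
    ordModPModMu K p η ≤ ordModP K p η ∧
    Real.log ((p : ℝ) - 1) / Real.log (houseC K ι (η : K)) ≤ (ordModPModMu K p η : ℝ) := by
  have hc₀ := one_lt_houseC ι hη0 hnr
  have hD := ordModP_pos hp.ne_zero (isUnit_mk_of_isPInt_inv hp hη0 hpr.2)
  obtain ⟨hd, ζ, ⟨j, hj, hζ⟩, hmem⟩ := ordModPModMu_spec hD
  have hne : η ^ ordModPModMu K p η ≠ ζ := fun h =>
    hnr ⟨_ * j, Nat.mul_pos hd hj, by rw [pow_mul, h, hζ]⟩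
  have hple := natCast_le_houseC_pow_add_one ι hj hζ hne hmem
  have hp2 : (2 : ℝ) ≤ p := by exact_mod_cast hp.two_le
  refine ⟨hc₀, ordModPModMu_le_ordModP hD, ?_⟩
  rw [div_le_iff₀ (Real.log_pos hc₀), ← Real.log_pow]
  exact Real.log_le_log (by linarith) (by linarith)
end
end

section
/- For every prime p ≥ 3 and every integer m with 0 ≤ m ≤ p−1 one has (1/p^{p−1})·∑_{j=m}^{p−1} C(p−1, j)·(p−1)^{p−1−j} ≤ (1/p^m)·C(p−1, m), with strict inequality whenever 1 ≤ m ≤ p−2 (and equality for m = 0 and m = p−1). Here C(a, b) denotes the binomial coefficient. -/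
/-!
With `n = p - 1` and `x = p - 1`, so that `p = 1 + x`, the claim says
`∑_{j ≥ m} C(n, j) x^(n-j) ≤ C(n, m) (1 + x)^(n-m)`. Expanding the right-hand side by the
binomial theorem and regrouping gives `∑_{j ≥ m} C(n, j) C(j, m) x^(n-j)`, which dominates the
left-hand side term by term because `C(j, m) ≥ 1`; the term `j = n` is strictly larger as soon
as `C(n, m) > 1`, i.e. `0 < m < n`. For `m = 0` the regrouped sum is the binomial expansion of
`(1 + x)^n` itself.
-/

open Finset

theorem Nat.one_lt_choose {n m : ℕ} (hm : 1 ≤ m) (hmn : m < n) : 1 < n.choose m := by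
  obtain ⟨n, rfl⟩ : ∃ n', n = n' + 1 := ⟨n - 1, by omega⟩
  obtain ⟨m, rfl⟩ : ∃ m', m = m' + 1 := ⟨m - 1, by omega⟩
  have := Nat.choose_pos (show m ≤ n by omega)
  have := Nat.choose_pos (show m + 1 ≤ n by omega)
  rw [Nat.choose_succ_succ']
  omega

section Identity

variable {R : Type*} [CommSemiring R]

theorem choose_mul_one_add_pow_eq_sum (n m : ℕ) (hm : m ≤ n) (x : R) :
    (n.choose m : R) * (1 + x) ^ (n - m) =
      ∑ j ∈ Icc m n, (n.choose j : R) * j.choose m * x ^ (n - j) := by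
  rw [add_pow, mul_sum, ← Finset.Ico_add_one_right_eq_Icc, sum_Ico_eq_sum_range,
    show n + 1 - m = n - m + 1 by omega]
  refine sum_congr rfl fun k hk => ?_
  have hkn : m + k ≤ n := by have := mem_range.1 hk; omega
  have hchoose : n.choose (m + k) * (m + k).choose m = n.choose m * (n - m).choose k := by
    simpa using Nat.choose_mul (n := n) (Nat.le_add_right m k)
  rw [show n - (m + k) = n - m - k by omega, ← Nat.cast_mul, hchoose]
  push_cast
  ring

theorem sum_choose_mul_pow_eq_one_add_pow (n : ℕ) (x : R) :
    ∑ j ∈ Icc 0 n, (n.choose j : R) * x ^ (n - j) = (1 + x) ^ n := by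
  simpa using (choose_mul_one_add_pow_eq_sum n 0 n.zero_le x).symm

end Identity

section TailBound

variable {R : Type*} [CommSemiring R] [PartialOrder R] [IsStrictOrderedRing R]

theorem sum_choose_mul_pow_le (n m : ℕ) (hm : m ≤ n) {x : R} (hx : 0 ≤ x) :
    ∑ j ∈ Icc m n, (n.choose j : R) * x ^ (n - j) ≤ n.choose m * (1 + x) ^ (n - m) := by
  rw [choose_mul_one_add_pow_eq_sum n m hm]
  refine sum_le_sum fun j hj => ?_
  have : (1 : R) ≤ j.choose m := by exact_mod_cast Nat.choose_pos (mem_Icc.1 hj).1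
  gcongr
  exact le_mul_of_one_le_right (by positivity) this

theorem sum_choose_mul_pow_lt (n m : ℕ) (hm : 1 ≤ m) (hmn : m < n) {x : R} (hx : 0 ≤ x) :
    ∑ j ∈ Icc m n, (n.choose j : R) * x ^ (n - j) < n.choose m * (1 + x) ^ (n - m) := by
  rw [choose_mul_one_add_pow_eq_sum n m hmn.le]
  refine sum_lt_sum (fun j hj => ?_) ⟨n, right_mem_Icc.2 hmn.le, ?_⟩
  · have : (1 : R) ≤ j.choose m := by exact_mod_cast Nat.choose_pos (mem_Icc.1 hj).1
    gcongr
    exact le_mul_of_one_le_right (by positivity) this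
  · simpa using (Nat.cast_lt (α := R)).2 (Nat.one_lt_choose hm hmn)

end TailBound

section Rescale

variable {K : Type*} [Field K] [LinearOrder K] [IsStrictOrderedRing K] {d a b : K} {m n : ℕ}

theorem one_div_pow_mul_le_one_div_pow_mul_iff (hd : 0 < d) (hmn : m ≤ n) :
    1 / d ^ n * a ≤ 1 / d ^ m * b ↔ a ≤ b * d ^ (n - m) := by
  rw [← pow_sub_mul_pow d hmn, one_div_mul_eq_div, one_div_mul_eq_div,
    div_le_div_iff₀ (by positivity) (by positivity), ← mul_assoc,
    mul_le_mul_iff_of_pos_right (by positivity)]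

theorem one_div_pow_mul_lt_one_div_pow_mul_iff (hd : 0 < d) (hmn : m ≤ n) :
    1 / d ^ n * a < 1 / d ^ m * b ↔ a < b * d ^ (n - m) := by
  rw [← pow_sub_mul_pow d hmn, one_div_mul_eq_div, one_div_mul_eq_div,
    div_lt_div_iff₀ (by positivity) (by positivity), ← mul_assoc,
    mul_lt_mul_iff_of_pos_right (by positivity)]

end Rescale

theorem statement18_general (p : ℕ) (hp3 : 3 ≤ p) (m : ℕ) (hm : m ≤ p - 1) :
    ((1 : ℝ) / (p : ℝ) ^ (p - 1)) *
        ∑ j ∈ Finset.Icc m (p - 1), ((p - 1).choose j : ℝ) * ((p : ℝ) - 1) ^ (p - 1 - j) ≤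
      ((1 : ℝ) / (p : ℝ) ^ m) * ((p - 1).choose m : ℝ) ∧
    (1 ≤ m → m ≤ p - 2 →
      ((1 : ℝ) / (p : ℝ) ^ (p - 1)) *
          ∑ j ∈ Finset.Icc m (p - 1), ((p - 1).choose j : ℝ) * ((p : ℝ) - 1) ^ (p - 1 - j) <
        ((1 : ℝ) / (p : ℝ) ^ m) * ((p - 1).choose m : ℝ)) ∧
    (m = 0 →
      ((1 : ℝ) / (p : ℝ) ^ (p - 1)) *
          ∑ j ∈ Finset.Icc m (p - 1), ((p - 1).choose j : ℝ) * ((p : ℝ) - 1) ^ (p - 1 - j) =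
        ((1 : ℝ) / (p : ℝ) ^ m) * ((p - 1).choose m : ℝ)) ∧
    (m = p - 1 →
      ((1 : ℝ) / (p : ℝ) ^ (p - 1)) *
          ∑ j ∈ Finset.Icc m (p - 1), ((p - 1).choose j : ℝ) * ((p : ℝ) - 1) ^ (p - 1 - j) =
        ((1 : ℝ) / (p : ℝ) ^ m) * ((p - 1).choose m : ℝ)) := by
  have hp : (0 : ℝ) < p := by positivity
  have hx : (0 : ℝ) ≤ p - 1 := sub_nonneg.2 (Nat.one_le_cast.2 (by omega))
  refine ⟨?_, fun hm1 hm2 => ?_, fun hm0 => ?_, fun hmp => ?_⟩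
  · rw [one_div_pow_mul_le_one_div_pow_mul_iff hp hm]
    simpa using sum_choose_mul_pow_le (p - 1) m hm hx
  · rw [one_div_pow_mul_lt_one_div_pow_mul_iff hp hm]
    simpa using sum_choose_mul_pow_lt (p - 1) m hm1 (by omega) hx
  · subst hm0
    simp [sum_choose_mul_pow_eq_one_add_pow, hp.ne']
  · subst hmp
    simp

/-- Lemma 7.4 (i). For every prime `p ≥ 3` and every `0 ≤ m ≤ p−1`,
`(1/p^{p−1})·∑_{j=m}^{p−1} C(p−1,j)·(p−1)^{p−1−j} ≤ (1/p^m)·C(p−1,m)`, with strict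
inequality for `1 ≤ m ≤ p−2` and equality for `m = 0` and `m = p−1`. -/
theorem statement18 (p : ℕ) (hp : p.Prime) (hp3 : 3 ≤ p) (m : ℕ) (hm : m ≤ p - 1) :
    ((1 : ℝ) / (p : ℝ) ^ (p - 1)) *
        ∑ j ∈ Finset.Icc m (p - 1), ((p - 1).choose j : ℝ) * ((p : ℝ) - 1) ^ (p - 1 - j) ≤
      ((1 : ℝ) / (p : ℝ) ^ m) * ((p - 1).choose m : ℝ) ∧
    (1 ≤ m → m ≤ p - 2 →
      ((1 : ℝ) / (p : ℝ) ^ (p - 1)) *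
          ∑ j ∈ Finset.Icc m (p - 1), ((p - 1).choose j : ℝ) * ((p : ℝ) - 1) ^ (p - 1 - j) <
        ((1 : ℝ) / (p : ℝ) ^ m) * ((p - 1).choose m : ℝ)) ∧
    (m = 0 →
      ((1 : ℝ) / (p : ℝ) ^ (p - 1)) *
          ∑ j ∈ Finset.Icc m (p - 1), ((p - 1).choose j : ℝ) * ((p : ℝ) - 1) ^ (p - 1 - j) =
        ((1 : ℝ) / (p : ℝ) ^ m) * ((p - 1).choose m : ℝ)) ∧
    (m = p - 1 →
      ((1 : ℝ) / (p : ℝ) ^ (p - 1)) *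
          ∑ j ∈ Finset.Icc m (p - 1), ((p - 1).choose j : ℝ) * ((p : ℝ) - 1) ^ (p - 1 - j) =
        ((1 : ℝ) / (p : ℝ) ^ m) * ((p - 1).choose m : ℝ)) :=
  statement18_general p hp3 m hm
end

section
/- Let c > 1 and Γ ≥ 1 be real constants, and for each prime p ≥ 3 set h(p) := ⌊(log(p−1) − log(2Γ))/log(c)⌋ (taken ≥ 0). Then the series ∑_{p prime} (1/p^{h(p)})·C(p−1, h(p)), taken over all primes p, is convergent, where C(a, b) denotes the binomial coefficient. -/
/-- `h(p) := ⌊(log(p−1) − log(2Γ))/log(c)⌋`, taken `≥ 0`. -/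
noncomputable def hExp (c Γ : ℝ) (p : ℕ) : ℕ :=
  (⌊(Real.log ((p : ℝ) - 1) - Real.log (2 * Γ)) / Real.log c⌋).toNat

private lemma key_bound (c Γ : ℝ) (hc : 1 < c) (hΓ : 1 ≤ Γ) (p : ℕ) (hp : p.Prime) :
    ((1 : ℝ) / (p : ℝ) ^ (hExp c Γ p)) * (((p : ℕ) - 1).choose (hExp c Γ p) : ℝ) ≤
      (2 * Γ * c + 1) ^ 2 * Real.exp (c ^ 2) / (p : ℝ) ^ 2 := by
  have hc0 : (0 : ℝ) < c := by linarith
  have hL : 0 < Real.log c := Real.log_pos hc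
  have hp2 : (2 : ℝ) ≤ (p : ℝ) := by exact_mod_cast hp.two_le
  have hp1 : (1 : ℝ) ≤ (p : ℝ) - 1 := by linarith
  set h : ℕ := hExp c Γ p with hh
  set x : ℝ := (Real.log ((p : ℝ) - 1) - Real.log (2 * Γ)) / Real.log c with hx
  have hΓ2 : (0 : ℝ) < 2 * Γ := by linarith
  -- x < h + 1
  have hxh : x < (h : ℝ) + 1 := by
    rcases le_or_gt 0 ⌊x⌋ with h0 | h0
    · have hcast : (h : ℝ) = (⌊x⌋ : ℝ) := by
        rw [hh, hExp, ← hx]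
        exact_mod_cast Int.toNat_of_nonneg h0
      have := Int.lt_floor_add_one x
      linarith
    · have hx0 : x < 0 := by
        have := (Int.floor_lt (z := 0)).mp (by simpa using h0)
        simpa using this
      have hnn : (0:ℝ) ≤ (h : ℝ) := Nat.cast_nonneg h
      linarith
  have hch : (1 : ℝ) ≤ c ^ h := one_le_pow₀ hc.le
  -- p ≤ (2Γc+1) c^h
  have hpbound : (p : ℝ) ≤ (2 * Γ * c + 1) * c ^ h := by
    have h1 : Real.log ((p : ℝ) - 1) < Real.log (2 * Γ * c ^ (h + 1)) := by
      rw [Real.log_mul (ne_of_gt hΓ2) (by positivity), Real.log_pow]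
      have := (div_lt_iff₀ hL).mp hxh
      push_cast at this ⊢
      linarith
    have h2 : (p : ℝ) - 1 < 2 * Γ * c ^ (h + 1) :=
      (Real.log_lt_log_iff (by linarith) (by positivity)).mp h1
    have : c ^ (h + 1) = c * c ^ h := by ring
    nlinarith
  -- term ≤ 1/h!
  have hterm1 : ((1 : ℝ) / (p : ℝ) ^ h) * ((p - 1).choose h : ℝ) ≤ 1 / (Nat.factorial h : ℝ) := by
    have hcb : ((p - 1).choose h : ℝ) ≤ ((p - 1 : ℕ) : ℝ) ^ h / (Nat.factorial h : ℝ) :=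
      Nat.choose_le_pow_div h (p - 1)
    have hple : ((p - 1 : ℕ) : ℝ) ^ h ≤ (p : ℝ) ^ h := by
      apply pow_le_pow_left₀ (by positivity)
      exact_mod_cast Nat.sub_le p 1
    have hpp : (0 : ℝ) < (p : ℝ) ^ h := by positivity
    have hfp : (0 : ℝ) < (Nat.factorial h : ℝ) := by exact_mod_cast h.factorial_pos
    rw [div_mul_eq_mul_div, one_mul, div_le_div_iff₀ hpp hfp]
    calc ((p - 1).choose h : ℝ) * (Nat.factorial h : ℝ) ≤ (((p - 1 : ℕ) : ℝ) ^ h / (Nat.factorial h : ℝ)) * (Nat.factorial h : ℝ) := by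
          exact mul_le_mul_of_nonneg_right hcb hfp.le
      _ = ((p - 1 : ℕ) : ℝ) ^ h := by field_simp
      _ ≤ (p : ℝ) ^ h := hple
      _ = 1 * (p : ℝ) ^ h := (one_mul _).symm
  -- (c²)^h ≤ h! * exp(c²)
  have hexp : (c ^ 2) ^ h / (Nat.factorial h : ℝ) ≤ Real.exp (c ^ 2) := by
    calc (c ^ 2) ^ h / (Nat.factorial h : ℝ)
        ≤ ∑ i ∈ Finset.range (h + 1), (c ^ 2) ^ i / (Nat.factorial i : ℝ) := by
          exact Finset.single_le_sum (f := fun i => (c ^ 2) ^ i / (Nat.factorial i : ℝ))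
            (fun i _ => by positivity) (Finset.self_mem_range_succ h)
      _ ≤ Real.exp (c ^ 2) := Real.sum_le_exp_of_nonneg (by positivity) _
  -- assemble
  have hfp : (0 : ℝ) < (Nat.factorial h : ℝ) := by exact_mod_cast h.factorial_pos
  have hp0 : (0 : ℝ) < (p : ℝ) := by linarith
  have hA : (0 : ℝ) < 2 * Γ * c + 1 := by positivity
  have hsq : (p : ℝ) ^ 2 ≤ (2 * Γ * c + 1) ^ 2 * ((c ^ 2) ^ h) := by
    have : ((2 * Γ * c + 1) * c ^ h) ^ 2 = (2 * Γ * c + 1) ^ 2 * ((c ^ 2) ^ h) := by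
      rw [mul_pow, ← pow_mul, ← pow_mul, Nat.mul_comm]
    rw [← this]
    exact pow_le_pow_left₀ hp0.le hpbound 2
  have h2 : 1 / (Nat.factorial h : ℝ) ≤ (2 * Γ * c + 1) ^ 2 * Real.exp (c ^ 2) / (p : ℝ) ^ 2 := by
    rw [div_le_div_iff₀ hfp (by positivity)]
    have h3 : (c ^ 2) ^ h ≤ (Nat.factorial h : ℝ) * Real.exp (c ^ 2) := by
      have := (div_le_iff₀ hfp).mp hexp
      linarith
    calc 1 * (p : ℝ) ^ 2 = (p : ℝ) ^ 2 := one_mul _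
      _ ≤ (2 * Γ * c + 1) ^ 2 * ((c ^ 2) ^ h) := hsq
      _ ≤ (2 * Γ * c + 1) ^ 2 * ((Nat.factorial h : ℝ) * Real.exp (c ^ 2)) := by
          exact mul_le_mul_of_nonneg_left h3 (by positivity)
      _ = (2 * Γ * c + 1) ^ 2 * Real.exp (c ^ 2) * (Nat.factorial h : ℝ) := by ring
  exact hterm1.trans h2

/-- Lemma 7.5. Let `c > 1` and `Γ ≥ 1` be real constants, and for each
prime `p` set `h(p) := ⌊(log(p−1) − log(2Γ))/log(c)⌋` (taken `≥ 0`). Then the series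
`∑_{p prime} (1/p^{h(p)})·C(p−1, h(p))` converges. -/
theorem statement19 (c Γ : ℝ) (hc : 1 < c) (hΓ : 1 ≤ Γ) :
    Summable (fun p : Nat.Primes =>
      ((1 : ℝ) / ((p : ℕ) : ℝ) ^ (hExp c Γ (p : ℕ))) *
        (((p : ℕ) - 1).choose (hExp c Γ (p : ℕ)) : ℝ)) := by
  have hsum : Summable (fun p : Nat.Primes =>
      (2 * Γ * c + 1) ^ 2 * Real.exp (c ^ 2) * ((p : ℕ) : ℝ) ^ (-2 : ℝ)) :=
    (Nat.Primes.summable_rpow.mpr (by norm_num)).mul_left _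
  have hsum' : Summable (fun p : Nat.Primes =>
      (2 * Γ * c + 1) ^ 2 * Real.exp (c ^ 2) / ((p : ℕ) : ℝ) ^ 2) := by
    refine hsum.congr fun p => ?_
    rw [show (-2 : ℝ) = -((2 : ℕ) : ℝ) by norm_num,
      Real.rpow_neg (by positivity), Real.rpow_natCast]
    rw [div_eq_mul_inv]
  refine hsum'.of_nonneg_of_le (fun p => by positivity) fun p => ?_
  exact key_bound c Γ hc hΓ (p : ℕ) p.2
end
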